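/- The Abel transform A h(r) = 2∫_r^∞ h(s)·s/√(s²-r²) ds of a compactly supported continuous h : [0,∞) → ℝ can be inverted: ∫_r^∞ (A h)(s)/(s·√((s/r)²-1)) ds = π·∫_r^∞ h(t) dt for all r > 0; in particular A is injective on compactly supported continuous functions. -/

import Mathlib

/-!
Fubini reduces the inversion formula to the kernel identity
`∫_r^t t / (√(t² - s²) · s · √((s/r)² - 1)) ds = π/2` for `0 < r < t`,
which follows from an explicit arcsine primitive. Injectivity follows: if `A h` vanishes then
every tail integral `∫_r^∞ h` vanishes, so `h = 0` on `(0, ∞)` by differentiating, and at `0`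
by continuity.
-/

open MeasureTheory Real

/-- The Abel transform of `h`. -/
noncomputable def abelTransform (h : ℝ → ℝ) (r : ℝ) : ℝ :=
  2 * ∫ s in Set.Ioi r, h s * s / Real.sqrt (s ^ 2 - r ^ 2)

open Set

/- For `t ≤ s` the first square root is `0`, so the kernel is `0` (division by zero); this is how
the Fubini step below restricts the square `(r, ∞)²` to the triangle `r < s < t`. -/
noncomputable def abelKernel (r t s : ℝ) : ℝ :=
  t / √(t ^ 2 - s ^ 2) / (s * √((s / r) ^ 2 - 1))

/- The substitution `u = s ^ 2` turns `∫ abelKernel r t s ds` into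
`∫ r t du / (2 u √((t ^ 2 - u) (u - r ^ 2)))`, a standard arcsine integral. -/
noncomputable def abelKernelPrimitive (r t s : ℝ) : ℝ :=
  arcsin (((r ^ 2 + t ^ 2) * s ^ 2 - 2 * r ^ 2 * t ^ 2) / (s ^ 2 * (t ^ 2 - r ^ 2))) / 2

lemma abelKernel_nonneg {r t s : ℝ} (ht : 0 ≤ t) (hs : 0 ≤ s) : 0 ≤ abelKernel r t s := by
  unfold abelKernel
  positivity

lemma abelKernel_of_le {r t s : ℝ} (ht : 0 ≤ t) (hts : t ≤ s) : abelKernel r t s = 0 := by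
  rw [abelKernel, sqrt_eq_zero_of_nonpos (by nlinarith), div_zero, zero_div]

lemma abelKernel_eq {r t s : ℝ} (hr : 0 < r) :
    abelKernel r t s = r * t / (s * √(t ^ 2 - s ^ 2) * √(s ^ 2 - r ^ 2)) := by
  have hsqrt : √((s / r) ^ 2 - 1) = √(s ^ 2 - r ^ 2) / r := by
    rw [show (s / r) ^ 2 - 1 = (s ^ 2 - r ^ 2) / r ^ 2 by field_simp,
      sqrt_div' _ (sq_nonneg r), sqrt_sq hr.le]
  rw [abelKernel, hsqrt]
  simp only [div_eq_mul_inv, mul_inv, inv_inv]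
  ring

lemma hasDerivAt_abelKernelPrimitive {r t s : ℝ} (hr : 0 < r) (hs : s ∈ Ioo r t) :
    HasDerivAt (abelKernelPrimitive r t) (abelKernel r t s) s := by
  obtain ⟨hrs, hst⟩ := hs
  have hs0 : 0 < s := hr.trans hrs
  have ht0 : 0 < t := hs0.trans hst
  have htr : 0 < t ^ 2 - r ^ 2 := by nlinarith
  have hts : 0 < t ^ 2 - s ^ 2 := by nlinarith
  have hsr : 0 < s ^ 2 - r ^ 2 := by nlinarith
  set ψ : ℝ → ℝ :=
    fun s ↦ ((r ^ 2 + t ^ 2) * s ^ 2 - 2 * r ^ 2 * t ^ 2) / (s ^ 2 * (t ^ 2 - r ^ 2))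
  have hψ' : HasDerivAt ψ (4 * r ^ 2 * t ^ 2 / (s ^ 3 * (t ^ 2 - r ^ 2))) s := by
    have := (((hasDerivAt_pow 2 s).const_mul (r ^ 2 + t ^ 2)).sub_const (2 * r ^ 2 * t ^ 2)).div
      ((hasDerivAt_pow 2 s).mul_const (t ^ 2 - r ^ 2)) (by positivity)
    refine this.congr_deriv ?_
    field_simp
    ring
  have hψ_lt : ψ s < 1 := by
    rw [div_lt_one (by positivity)]
    nlinarith [mul_pos (pow_pos hr 2) hts]
  have hψ_gt : -1 < ψ s := by
    rw [lt_div_iff₀ (by positivity)]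
    nlinarith [mul_pos (pow_pos ht0 2) hsr]
  have hsqrt : √(1 - ψ s ^ 2)
      = 2 * r * t * √(t ^ 2 - s ^ 2) * √(s ^ 2 - r ^ 2) / (s ^ 2 * (t ^ 2 - r ^ 2)) := by
    rw [← sqrt_sq (by positivity :
      0 ≤ 2 * r * t * √(t ^ 2 - s ^ 2) * √(s ^ 2 - r ^ 2) / (s ^ 2 * (t ^ 2 - r ^ 2)))]
    congr 1
    simp only [ψ]
    field_simp
    rw [sq_sqrt hts.le, sq_sqrt hsr.le]
    ring
  refine (((hasDerivAt_arcsin hψ_gt.ne' hψ_lt.ne).comp s hψ').div_const 2).congr_deriv ?_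
  rw [abelKernel_eq hr, hsqrt]
  field_simp
  ring

lemma continuousOn_abelKernelPrimitive {r t : ℝ} (hr : 0 < r) (hrt : r < t) :
    ContinuousOn (abelKernelPrimitive r t) (Icc r t) := by
  have htr : t ^ 2 - r ^ 2 ≠ 0 := by nlinarith
  refine (continuous_arcsin.comp_continuousOn (ContinuousOn.div (by fun_prop) (by fun_prop)
    fun s hs ↦ ?_)).div_const 2
  have : 0 < s := hr.trans_le hs.1
  positivity

lemma abelKernelPrimitive_left {r t : ℝ} (hr : 0 < r) (hrt : r < t) :
    abelKernelPrimitive r t r = -(π / 4) := by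
  have : 0 < t ^ 2 - r ^ 2 := by nlinarith
  rw [abelKernelPrimitive, show (r ^ 2 + t ^ 2) * r ^ 2 - 2 * r ^ 2 * t ^ 2
    = -(r ^ 2 * (t ^ 2 - r ^ 2)) by ring, neg_div, div_self (by positivity), arcsin_neg,
    arcsin_one]
  ring

lemma abelKernelPrimitive_right {r t : ℝ} (hr : 0 < r) (hrt : r < t) :
    abelKernelPrimitive r t t = π / 4 := by
  have : 0 < t := hr.trans hrt
  have : 0 < t ^ 2 - r ^ 2 := by nlinarith
  rw [abelKernelPrimitive, show (r ^ 2 + t ^ 2) * t ^ 2 - 2 * r ^ 2 * t ^ 2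
    = t ^ 2 * (t ^ 2 - r ^ 2) by ring, div_self (by positivity), arcsin_one]
  ring

lemma integrableOn_abelKernel_Ioc {r t : ℝ} (hr : 0 < r) (hrt : r < t) :
    IntegrableOn (abelKernel r t) (Ioc r t) :=
  intervalIntegral.integrableOn_deriv_of_nonneg (continuousOn_abelKernelPrimitive hr hrt)
    (fun _ hs ↦ hasDerivAt_abelKernelPrimitive hr hs)
    fun _ hs ↦ abelKernel_nonneg (hr.trans hrt).le (hr.trans hs.1).le

lemma integral_abelKernel_Ioc {r t : ℝ} (hr : 0 < r) (hrt : r < t) :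
    ∫ s in Ioc r t, abelKernel r t s = π / 2 := by
  rw [← intervalIntegral.integral_of_le hrt.le,
    intervalIntegral.integral_eq_sub_of_hasDerivAt_of_le hrt.le
      (continuousOn_abelKernelPrimitive hr hrt) (fun _ hs ↦ hasDerivAt_abelKernelPrimitive hr hs)
      ((intervalIntegrable_iff_integrableOn_Ioc_of_le hrt.le).2
        (integrableOn_abelKernel_Ioc hr hrt)),
    abelKernelPrimitive_left hr hrt, abelKernelPrimitive_right hr hrt]
  ring

lemma abelKernel_eq_zero_of_mem_Ioi_diff_Ioc {r t s : ℝ} (hr : 0 < r) (hrt : r < t)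
    (hs : s ∈ Ioi r \ Ioc r t) : abelKernel r t s = 0 :=
  abelKernel_of_le (hr.trans hrt).le (not_le.1 fun hst ↦ hs.2 ⟨hs.1, hst⟩).le

lemma integrableOn_abelKernel_Ioi {r t : ℝ} (hr : 0 < r) (hrt : r < t) :
    IntegrableOn (abelKernel r t) (Ioi r) :=
  (integrableOn_abelKernel_Ioc hr hrt).of_forall_sdiff_eq_zero measurableSet_Ioi
    fun _ hs ↦ abelKernel_eq_zero_of_mem_Ioi_diff_Ioc hr hrt hs

lemma integral_abelKernel_Ioi {r t : ℝ} (hr : 0 < r) (hrt : r < t) :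
    ∫ s in Ioi r, abelKernel r t s = π / 2 := by
  rw [setIntegral_eq_of_subset_of_forall_sdiff_eq_zero measurableSet_Ioi Ioc_subset_Ioi_self
    fun _ hs ↦ abelKernel_eq_zero_of_mem_Ioi_diff_Ioc hr hrt hs, integral_abelKernel_Ioc hr hrt]

lemma abelTransform_eq_integral_Ioi (h : ℝ → ℝ) {r s : ℝ} (hr : 0 ≤ r) (hrs : r ≤ s) :
    abelTransform h s = 2 * ∫ t in Ioi r, h t * t / √(t ^ 2 - s ^ 2) := by
  rw [abelTransform, setIntegral_eq_of_subset_of_forall_sdiff_eq_zero measurableSet_Ioi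
    (Ioi_subset_Ioi hrs) fun t ht ↦ ?_]
  have hts : t ≤ s := not_lt.1 ht.2
  have : 0 ≤ t := hr.trans (le_of_lt ht.1)
  rw [sqrt_eq_zero_of_nonpos (by nlinarith), div_zero]

lemma abelTransform_div_eq_integral (h : ℝ → ℝ) {r s : ℝ} (hr : 0 ≤ r) (hrs : r ≤ s) :
    abelTransform h s / (s * √((s / r) ^ 2 - 1))
      = 2 * ∫ t in Ioi r, h t * abelKernel r t s := by
  simp only [abelTransform_eq_integral_Ioi h hr hrs, mul_div_assoc, ← integral_div, abelKernel]

lemma integrable_abelKernel_prod {h : ℝ → ℝ} {r : ℝ} (hm : Measurable h)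
    (hi : IntegrableOn h (Ioi r)) (hr : 0 < r) :
    Integrable (Function.uncurry fun s t ↦ h t * abelKernel r t s)
      ((volume.restrict (Ioi r)).prod (volume.restrict (Ioi r))) := by
  have hmeas : Measurable (Function.uncurry fun s t ↦ h t * abelKernel r t s) := by
    simp only [Function.uncurry_def, abelKernel]
    fun_prop
  refine (integrable_prod_iff' hmeas.aestronglyMeasurable).2 ⟨?_, ?_⟩
  · filter_upwards [ae_restrict_mem measurableSet_Ioi] with t ht
    exact (integrableOn_abelKernel_Ioi hr ht).const_mul (h t)
  · refine (hi.norm.const_mul (π / 2)).congr ?_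
    filter_upwards [ae_restrict_mem measurableSet_Ioi] with t (ht : r < t)
    have hnorm : ∀ s ∈ Ioi r, ‖h t * abelKernel r t s‖ = ‖h t‖ * abelKernel r t s :=
      fun s hs ↦ by
        rw [norm_mul, norm_of_nonneg (abelKernel_nonneg (hr.trans ht).le (hr.trans hs).le)]
    simp only [Function.uncurry_apply_pair]
    rw [setIntegral_congr_fun measurableSet_Ioi hnorm, integral_const_mul,
      integral_abelKernel_Ioi hr ht, mul_comm]

theorem integral_abelTransform_div {h : ℝ → ℝ} {r : ℝ} (hm : Measurable h)
    (hi : IntegrableOn h (Ioi r)) (hr : 0 < r) :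
    ∫ s in Ioi r, abelTransform h s / (s * √((s / r) ^ 2 - 1)) = π * ∫ t in Ioi r, h t := by
  calc ∫ s in Ioi r, abelTransform h s / (s * √((s / r) ^ 2 - 1))
      = 2 * ∫ s in Ioi r, ∫ t in Ioi r, h t * abelKernel r t s := by
        rw [← integral_const_mul]
        exact setIntegral_congr_fun measurableSet_Ioi fun s hs ↦
          abelTransform_div_eq_integral h hr.le (le_of_lt hs)
    _ = 2 * ∫ t in Ioi r, ∫ s in Ioi r, h t * abelKernel r t s := by
        rw [integral_integral_swap (integrable_abelKernel_prod hm hi hr)]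
    _ = 2 * ∫ t in Ioi r, π / 2 * h t := by
        congr 1
        refine setIntegral_congr_fun measurableSet_Ioi fun t ht ↦ ?_
        rw [integral_const_mul, integral_abelKernel_Ioi hr ht, mul_comm]
    _ = π * ∫ t in Ioi r, h t := by
        rw [integral_const_mul]
        ring

lemma eqOn_zero_of_forall_integral_Ioi_eq_zero {h : ℝ → ℝ} {a : ℝ} (hc : Continuous h)
    (hi : IntegrableOn h (Ioi a)) (h0 : ∀ r > a, ∫ t in Ioi r, h t = 0) : EqOn h 0 (Ici a) := by
  have hpos : EqOn h 0 (Ioi a) := fun t (ht : a < t) ↦ by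
    obtain ⟨b, hab, hbt⟩ := exists_between ht
    have hb : IntegrableOn h (Ioi b) := hi.mono_set (Ioi_subset_Ioi hab.le)
    have hF : HasDerivAt (fun x ↦ ∫ u in b..x, h u) (h t) t :=
      intervalIntegral.integral_hasDerivAt_right (hc.intervalIntegrable b t)
        hc.stronglyMeasurable.stronglyMeasurableAtFilter hc.continuousAt
    have hF0 : (fun x ↦ ∫ u in b..x, h u) =ᶠ[nhds t] fun _ ↦ 0 := by
      filter_upwards [Ioi_mem_nhds hbt] with x (hx : b < x)
      rw [← intervalIntegral.integral_Ioi_sub_Ioi hb hx.le, h0 b hab, h0 x (hab.trans hx),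
        sub_zero]
    exact (hF.congr_of_eventuallyEq hF0.symm).unique (hasDerivAt_const t 0)
  rw [← closure_Ioi]
  exact hpos.closure hc continuous_const

theorem abel_inversion_general (h : ℝ → ℝ) (hc : Continuous h)
    (hsupp : HasCompactSupport h) :
    (∀ r > (0 : ℝ),
      ∫ s in Set.Ioi r, abelTransform h s / (s * Real.sqrt ((s / r) ^ 2 - 1))
        = π * ∫ t in Set.Ioi r, h t) ∧
    ((∀ r > (0 : ℝ), abelTransform h r = 0) → ∀ s, 0 ≤ s → h s = 0) := by
  have hi : Integrable h := hc.integrable_of_hasCompactSupport hsupp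
  have inversion : ∀ r > (0 : ℝ), ∫ s in Ioi r, abelTransform h s / (s * √((s / r) ^ 2 - 1))
      = π * ∫ t in Ioi r, h t :=
    fun r hr ↦ integral_abelTransform_div hc.measurable hi.integrableOn hr
  refine ⟨inversion, fun hA ↦ ?_⟩
  have h0 : ∀ r > (0 : ℝ), ∫ t in Ioi r, h t = 0 := fun r hr ↦ by
    have := inversion r hr
    rw [setIntegral_congr_fun measurableSet_Ioi fun s hs ↦ by rw [hA s (hr.trans hs), zero_div],
      integral_zero] at this
    exact (mul_eq_zero.1 this.symm).resolve_left pi_ne_zero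
  exact fun s hs ↦ eqOn_zero_of_forall_integral_Ioi_eq_zero hc hi.integrableOn h0 hs

theorem abel_inversion (h : ℝ → ℝ) (hc : Continuous h)
    (hsupp : HasCompactSupport h) (hneg : ∀ s < (0 : ℝ), h s = 0) :
    (∀ r > (0 : ℝ),
      ∫ s in Set.Ioi r, abelTransform h s / (s * Real.sqrt ((s / r) ^ 2 - 1))
        = π * ∫ t in Set.Ioi r, h t) ∧
    ((∀ r > (0 : ℝ), abelTransform h r = 0) → ∀ s, 0 ≤ s → h s = 0) :=
  abel_inversion_general h hc hsupp
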